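/- Let V be a unital associative 𝔽-algebra with pairwise strongly commuting 2-fold derivations D₁,…,D_ℓ (i.e., (D_i)_L ∘ D_j = (D_j)_R ∘ D_i for all i,j). For P = (P₁,…,P_ℓ) ∈ V^ℓ define X_P : V → V by X_P(f) := Σ_{i=1}^{ℓ} (D_i f)′ P_i (D_i f)″ (Sweedler notation for D_i f ∈ V⊗V). Then each X_P is a derivation of V, and for all P, Q ∈ V^ℓ: X_P ∘ X_Q − X_Q ∘ X_P = X_{[P,Q]}, where [P,Q]_i := X_P(Q_i) − X_Q(P_i). -/

import Mathlib

open TensorProduct LinearMap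

section DPA

variable (𝔽 : Type) [Field 𝔽] (V : Type) [Ring V] [Algebra 𝔽 V]

/-- The swap `(u ⊗ v)^σ = v ⊗ u` on `V ⊗ V`. -/
noncomputable abbrev swap2 : V ⊗[𝔽] V ≃ₗ[𝔽] V ⊗[𝔽] V := TensorProduct.comm 𝔽 V V

/-- The cyclic permutation `(u ⊗ v ⊗ w)^σ = w ⊗ u ⊗ v` on `V ⊗ V ⊗ V = (V ⊗ V) ⊗ V`. -/
noncomputable def sigma3 : (V ⊗[𝔽] V) ⊗[𝔽] V ≃ₗ[𝔽] (V ⊗[𝔽] V) ⊗[𝔽] V :=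
  (TensorProduct.comm 𝔽 (V ⊗[𝔽] V) V).trans (TensorProduct.assoc 𝔽 V V V).symm

/-- Left multiplication `a · (u ⊗ v) = (a*u) ⊗ v` (outer bimodule structure). -/
noncomputable def lact2 (a : V) : V ⊗[𝔽] V →ₗ[𝔽] V ⊗[𝔽] V :=
  LinearMap.rTensor V (LinearMap.mulLeft 𝔽 a)

/-- Right multiplication `(u ⊗ v) · c = u ⊗ (v*c)` (outer bimodule structure). -/
noncomputable def ract2 (c : V) : V ⊗[𝔽] V →ₗ[𝔽] V ⊗[𝔽] V :=
  LinearMap.lTensor V (LinearMap.mulRight 𝔽 c)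

/-- `(u ⊗ v) ⋆₁ b = (u*b) ⊗ v`. -/
noncomputable def star1r (b : V) : V ⊗[𝔽] V →ₗ[𝔽] V ⊗[𝔽] V :=
  LinearMap.rTensor V (LinearMap.mulRight 𝔽 b)

/-- `a ⋆₁ (u ⊗ v) = u ⊗ (a*v)`. -/
noncomputable def star1l (a : V) : V ⊗[𝔽] V →ₗ[𝔽] V ⊗[𝔽] V :=
  LinearMap.lTensor V (LinearMap.mulLeft 𝔽 a)

/-- The `•`-product on `V ⊗ V`:  `(u ⊗ v) • (x ⊗ y) = (u*x) ⊗ (y*v)`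
(the multiplication of `V ⊗ Vᵒᵖ`). -/
noncomputable def bullet : V ⊗[𝔽] V →ₗ[𝔽] V ⊗[𝔽] V →ₗ[𝔽] V ⊗[𝔽] V :=
  TensorProduct.lift
    (((TensorProduct.mapBilinear (RingHom.id 𝔽) V V V V).comp (LinearMap.mul 𝔽 V)).compl₂
      ((LinearMap.mul 𝔽 V).flip))

/-- A `2`-fold bracket on `V`: an `𝔽`-bilinear map `V × V → V ⊗ V` satisfying the two
Leibniz rules `{{a,bc}} = {{a,b}}·c + b·{{a,c}}` and `{{ab,c}} = {{a,c}} ⋆₁ b + a ⋆₁ {{b,c}}`. -/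
def IsDoubleBracket (Br : V →ₗ[𝔽] V →ₗ[𝔽] V ⊗[𝔽] V) : Prop :=
  (∀ a b c : V, Br a (b * c) = ract2 𝔽 V c (Br a b) + lact2 𝔽 V b (Br a c)) ∧
  (∀ a b c : V, Br (a * b) c = star1r 𝔽 V b (Br a c) + star1l 𝔽 V a (Br b c))

variable {𝔽 V}

/-- `{{a, B}}_L` : apply the bracket to the first tensor factor. -/
noncomputable def brL (Br : V →ₗ[𝔽] V →ₗ[𝔽] V ⊗[𝔽] V) (a : V) :
    V ⊗[𝔽] V →ₗ[𝔽] (V ⊗[𝔽] V) ⊗[𝔽] V :=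
  LinearMap.rTensor V (Br a)

/-- `{{a, B}}_R` : apply the bracket to the second tensor factor. -/
noncomputable def brR (Br : V →ₗ[𝔽] V →ₗ[𝔽] V ⊗[𝔽] V) (a : V) :
    V ⊗[𝔽] V →ₗ[𝔽] (V ⊗[𝔽] V) ⊗[𝔽] V :=
  (TensorProduct.assoc 𝔽 V V V).symm.toLinearMap ∘ₗ LinearMap.lTensor V (Br a)

variable (𝔽 V)

/-- `ρ₂` : swap the last two tensor factors of `V ⊗ V ⊗ V`. -/
noncomputable def rho2 : (V ⊗[𝔽] V) ⊗[𝔽] V ≃ₗ[𝔽] (V ⊗[𝔽] V) ⊗[𝔽] V :=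
  (TensorProduct.assoc 𝔽 V V V).trans
    ((TensorProduct.congr (LinearEquiv.refl 𝔽 V) (TensorProduct.comm 𝔽 V V)).trans
      (TensorProduct.assoc 𝔽 V V V).symm)

variable {𝔽 V}

/-- Conjugated bullet action used to define the actions `•ᵢ` of `V ⊗ V` on `V ⊗ V ⊗ V`. -/
noncomputable def conjAct (β : V ⊗[𝔽] V →ₗ[𝔽] V ⊗[𝔽] V →ₗ[𝔽] V ⊗[𝔽] V)
    (ρ : (V ⊗[𝔽] V) ⊗[𝔽] V ≃ₗ[𝔽] (V ⊗[𝔽] V) ⊗[𝔽] V) :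
    V ⊗[𝔽] V →ₗ[𝔽] (V ⊗[𝔽] V) ⊗[𝔽] V →ₗ[𝔽] (V ⊗[𝔽] V) ⊗[𝔽] V :=
  (LinearMap.lcomp 𝔽 _ ρ.toLinearMap) ∘ₗ
    (LinearMap.llcomp 𝔽 ((V ⊗[𝔽] V) ⊗[𝔽] V) ((V ⊗[𝔽] V) ⊗[𝔽] V) ((V ⊗[𝔽] V) ⊗[𝔽] V)
      ρ.symm.toLinearMap) ∘ₗ
    (LinearMap.rTensorHom V) ∘ₗ β

variable (𝔽 V)

/-- The right action `X •₁ A`, i.e. `(x⊗y⊗z) •₁ (a⊗b) = x⊗(y*a)⊗(b*z)`;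
`bAct1R A X = X •₁ A`. -/
noncomputable def bAct1R : V ⊗[𝔽] V →ₗ[𝔽] (V ⊗[𝔽] V) ⊗[𝔽] V →ₗ[𝔽] (V ⊗[𝔽] V) ⊗[𝔽] V :=
  conjAct (bullet 𝔽 V).flip ((sigma3 𝔽 V).trans (sigma3 𝔽 V))

/-- The left action `A •₂ X`, i.e. `(a⊗b) •₂ (x⊗y⊗z) = (a*x)⊗y⊗(z*b)`. -/
noncomputable def bAct2L : V ⊗[𝔽] V →ₗ[𝔽] (V ⊗[𝔽] V) ⊗[𝔽] V →ₗ[𝔽] (V ⊗[𝔽] V) ⊗[𝔽] V :=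
  conjAct (bullet 𝔽 V) (rho2 𝔽 V)

/-- The right action `X •₃ A`, i.e. `(x⊗y⊗z) •₃ (a⊗b) = (x*a)⊗(b*y)⊗z`;
`bAct3R A X = X •₃ A`. -/
noncomputable def bAct3R : V ⊗[𝔽] V →ₗ[𝔽] (V ⊗[𝔽] V) ⊗[𝔽] V →ₗ[𝔽] (V ⊗[𝔽] V) ⊗[𝔽] V :=
  conjAct (bullet 𝔽 V).flip (LinearEquiv.refl 𝔽 ((V ⊗[𝔽] V) ⊗[𝔽] V))

/-- `a ⋆₁ (x⊗y⊗z) = x⊗(a*y)⊗z`. -/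
noncomputable def slot2L (a : V) : (V ⊗[𝔽] V) ⊗[𝔽] V →ₗ[𝔽] (V ⊗[𝔽] V) ⊗[𝔽] V :=
  LinearMap.rTensor V (LinearMap.lTensor V (LinearMap.mulLeft 𝔽 a))

/-- `(x⊗y⊗z) ⋆₁ b = x⊗(y*b)⊗z`. -/
noncomputable def slot2R (b : V) : (V ⊗[𝔽] V) ⊗[𝔽] V →ₗ[𝔽] (V ⊗[𝔽] V) ⊗[𝔽] V :=
  LinearMap.rTensor V (LinearMap.lTensor V (LinearMap.mulRight 𝔽 b))

/-- `a ⋆₂ (x⊗y⊗z) = x⊗y⊗(a*z)`. -/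
noncomputable def slot3L (a : V) : (V ⊗[𝔽] V) ⊗[𝔽] V →ₗ[𝔽] (V ⊗[𝔽] V) ⊗[𝔽] V :=
  LinearMap.lTensor (V ⊗[𝔽] V) (LinearMap.mulLeft 𝔽 a)

/-- `(x⊗y⊗z) ⋆₂ b = (x*b)⊗y⊗z`. -/
noncomputable def slot1R (b : V) : (V ⊗[𝔽] V) ⊗[𝔽] V →ₗ[𝔽] (V ⊗[𝔽] V) ⊗[𝔽] V :=
  LinearMap.rTensor V (LinearMap.rTensor V (LinearMap.mulRight 𝔽 b))

/-- outer left: `a · (x⊗y⊗z) = (a*x)⊗y⊗z`. -/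
noncomputable def slot1L (a : V) : (V ⊗[𝔽] V) ⊗[𝔽] V →ₗ[𝔽] (V ⊗[𝔽] V) ⊗[𝔽] V :=
  LinearMap.rTensor V (LinearMap.rTensor V (LinearMap.mulLeft 𝔽 a))

/-- outer right: `(x⊗y⊗z) · b = x⊗y⊗(z*b)`. -/
noncomputable def slot3R (b : V) : (V ⊗[𝔽] V) ⊗[𝔽] V →ₗ[𝔽] (V ⊗[𝔽] V) ⊗[𝔽] V :=
  LinearMap.lTensor (V ⊗[𝔽] V) (LinearMap.mulRight 𝔽 b)

variable {𝔽 V}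

/-- The triple bracket `{{a,b,c}}`. -/
noncomputable def triple (Br : V →ₗ[𝔽] V →ₗ[𝔽] V ⊗[𝔽] V) (a b c : V) :
    (V ⊗[𝔽] V) ⊗[𝔽] V :=
  brL Br a (Br b c) + sigma3 𝔽 V (brL Br b (Br c a)) +
    sigma3 𝔽 V (sigma3 𝔽 V (brL Br c (Br a b)))

variable (𝔽 V)

/-- Skewsymmetry of a 2-fold bracket. -/
def IsSkew (Br : V →ₗ[𝔽] V →ₗ[𝔽] V ⊗[𝔽] V) : Prop :=
  ∀ a b : V, Br a b = - swap2 𝔽 V (Br b a)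

/-- The span of commutators `[V,V]`. -/
def commSub : Submodule 𝔽 V := Submodule.span 𝔽 {x : V | ∃ a b : V, x = a * b - b * a}

variable {𝔽 V}

/-- The associated bracket `{a,b} = m {{a,b}}`. -/
noncomputable def sb (Br : V →ₗ[𝔽] V →ₗ[𝔽] V ⊗[𝔽] V) (a b : V) : V :=
  LinearMap.mul' 𝔽 V (Br a b)

/-- A 2-fold derivation: `D(ab) = (Da)·b + a·(Db)`. -/
def Is2Deriv (D : V →ₗ[𝔽] V ⊗[𝔽] V) : Prop :=
  ∀ a b : V, D (a * b) = ract2 𝔽 V b (D a) + lact2 𝔽 V a (D b)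

/-- `D` and `E` strongly commute: `D_L ∘ E = E_R ∘ D`. -/
def StronglyComm (D E : V →ₗ[𝔽] V ⊗[𝔽] V) : Prop :=
  ∀ f : V, LinearMap.rTensor V D (E f) =
    (TensorProduct.assoc 𝔽 V V V).symm (LinearMap.lTensor V E (D f))


/-- `midMul p (u ⊗ v) = u * p * v`. -/
noncomputable def midMul (𝔽 : Type) [Field 𝔽] (V : Type) [Ring V] [Algebra 𝔽 V]
    (p : V) : V ⊗[𝔽] V →ₗ[𝔽] V :=
  (LinearMap.mul' 𝔽 V) ∘ₗ LinearMap.rTensor V (LinearMap.mulRight 𝔽 p)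

/-- The evolutionary vector field `X_P(f) = Σ_i (D_i f)′ P_i (D_i f)″`. -/
noncomputable def XPvf (𝔽 : Type) [Field 𝔽] (V : Type) [Ring V] [Algebra 𝔽 V]
    {ℓ : ℕ} (D : Fin ℓ → (V →ₗ[𝔽] V ⊗[𝔽] V)) (P : Fin ℓ → V) : V →ₗ[𝔽] V :=
  ∑ i : Fin ℓ, (midMul 𝔽 V (P i)) ∘ₗ (D i)

/-! Expanding `X_P (X_Q f)` by the Leibniz rule of each `D_j` gives `X_{X_P Q}(f)` plus the
terms `(D_j)_L (D_i f)` and `(D_j)_R (D_i f)` with `P_j`, `Q_i` inserted in the gaps. Strong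
commutativity turns the second kind into the first with `P` and `Q` exchanged, so this remainder
is symmetric in `P, Q` and cancels in the commutator. -/

section EvolutionaryVectorField

lemma midMul_tmul (p u v : V) : midMul 𝔽 V p (u ⊗ₜ v) = u * p * v := by
  simp [midMul]

lemma midMul_ract2 (p c : V) (w : V ⊗[𝔽] V) :
    midMul 𝔽 V p (ract2 𝔽 V c w) = midMul 𝔽 V p w * c := by
  induction w using TensorProduct.induction_on with
  | zero => simp
  | tmul u v => simp [midMul_tmul, ract2, mul_assoc]
  | add x y hx hy => simp only [map_add, hx, hy, add_mul]

lemma midMul_lact2 (a p : V) (w : V ⊗[𝔽] V) :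
    midMul 𝔽 V p (lact2 𝔽 V a w) = a * midMul 𝔽 V p w := by
  induction w using TensorProduct.induction_on with
  | zero => simp
  | tmul u v => simp [midMul_tmul, lact2, mul_assoc]
  | add x y hx hy => simp only [map_add, hx, hy, mul_add]

variable (𝔽 V) in
noncomputable def midMulₗ : V →ₗ[𝔽] V ⊗[𝔽] V →ₗ[𝔽] V :=
  LinearMap.llcomp 𝔽 _ _ _ (LinearMap.mul' 𝔽 V) ∘ₗ rTensorHom V ∘ₗ (LinearMap.mul 𝔽 V).flip

lemma midMulₗ_apply (p : V) : midMulₗ 𝔽 V p = midMul 𝔽 V p := rfl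

lemma midMul_sub (p q : V) (w : V ⊗[𝔽] V) :
    midMul 𝔽 V (p - q) w = midMul 𝔽 V p w - midMul 𝔽 V q w := by
  simp only [← midMulₗ_apply, map_sub, LinearMap.sub_apply]

lemma midMul_sum {ι : Type*} (s : Finset ι) (p : ι → V) (w : V ⊗[𝔽] V) :
    midMul 𝔽 V (∑ j ∈ s, p j) w = ∑ j ∈ s, midMul 𝔽 V (p j) w := by
  simp only [← midMulₗ_apply, map_sum, LinearMap.sum_apply]

variable (𝔽 V) in
noncomputable def midMul₂ (p q : V) : (V ⊗[𝔽] V) ⊗[𝔽] V →ₗ[𝔽] V :=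
  midMul 𝔽 V q ∘ₗ LinearMap.rTensor V (midMul 𝔽 V p)

lemma midMul₂_tmul (p q : V) (w : V ⊗[𝔽] V) (v : V) :
    midMul₂ 𝔽 V p q (w ⊗ₜ v) = midMul 𝔽 V p w * q * v := by
  simp [midMul₂, midMul_tmul]

lemma midMul₂_assoc_symm_tmul (p q u : V) (w : V ⊗[𝔽] V) :
    midMul₂ 𝔽 V p q ((TensorProduct.assoc 𝔽 V V V).symm (u ⊗ₜ w)) =
      u * p * midMul 𝔽 V q w := by
  induction w using TensorProduct.induction_on with
  | zero => simp
  | tmul x y => simp [midMul₂_tmul, midMul_tmul, mul_assoc]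
  | add x y hx hy => simp only [tmul_add, map_add, hx, hy, mul_add]

lemma Is2Deriv.midMul_apply_midMul {E : V →ₗ[𝔽] V ⊗[𝔽] V} (hE : Is2Deriv E)
    (p q : V) (w : V ⊗[𝔽] V) :
    midMul 𝔽 V p (E (midMul 𝔽 V q w)) =
      midMul₂ 𝔽 V p q (LinearMap.rTensor V E w) + midMul 𝔽 V (midMul 𝔽 V p (E q)) w +
        midMul₂ 𝔽 V q p ((TensorProduct.assoc 𝔽 V V V).symm (LinearMap.lTensor V E w)) := by
  induction w using TensorProduct.induction_on with
  | zero => simp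
  | tmul u v =>
      simp only [midMul_tmul, hE (u * q) v, hE u q, map_add, midMul_ract2, midMul_lact2,
        LinearMap.rTensor_tmul, LinearMap.lTensor_tmul, midMul₂_tmul, midMul₂_assoc_symm_tmul]
  | add x y hx hy =>
      simp only [map_add, hx, hy]
      abel

variable {ℓ : ℕ} {D : Fin ℓ → (V →ₗ[𝔽] V ⊗[𝔽] V)}

lemma XPvf_apply (P : Fin ℓ → V) (f : V) :
    XPvf 𝔽 V D P f = ∑ i, midMul 𝔽 V (P i) (D i f) := by
  simp [XPvf]

lemma XPvf_sub (P Q : Fin ℓ → V) : XPvf 𝔽 V D (P - Q) = XPvf 𝔽 V D P - XPvf 𝔽 V D Q := by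
  ext f
  simp only [LinearMap.sub_apply, XPvf_apply, Pi.sub_apply, midMul_sub, Finset.sum_sub_distrib]

lemma XPvf_mul (hD : ∀ i, Is2Deriv (D i)) (P : Fin ℓ → V) (a b : V) :
    XPvf 𝔽 V D P (a * b) = XPvf 𝔽 V D P a * b + a * XPvf 𝔽 V D P b := by
  simp only [XPvf_apply, hD _ a b, map_add, midMul_ract2, midMul_lact2, Finset.sum_add_distrib,
    Finset.sum_mul, Finset.mul_sum]

lemma XPvf_apply_XPvf (hD : ∀ i, Is2Deriv (D i)) (hcomm : ∀ i j, StronglyComm (D i) (D j))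
    (P Q : Fin ℓ → V) (f : V) :
    XPvf 𝔽 V D P (XPvf 𝔽 V D Q f) =
      ∑ j, ∑ i, midMul₂ 𝔽 V (P j) (Q i) (LinearMap.rTensor V (D j) (D i f)) +
        XPvf 𝔽 V D (fun i => XPvf 𝔽 V D P (Q i)) f +
        ∑ i, ∑ j, midMul₂ 𝔽 V (Q i) (P j) (LinearMap.rTensor V (D i) (D j f)) := by
  have hsymm (i j : Fin ℓ) :
      (TensorProduct.assoc 𝔽 V V V).symm (LinearMap.lTensor V (D j) (D i f)) =
        LinearMap.rTensor V (D i) (D j f) :=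
    (hcomm i j f).symm
  simp only [XPvf_apply, map_sum, (hD _).midMul_apply_midMul, hsymm, Finset.sum_add_distrib,
    midMul_sum]
  rw [Finset.sum_comm (γ := Fin ℓ) (f := fun i j =>
    midMul₂ 𝔽 V (P j) (Q i) (LinearMap.rTensor V (D j) (D i f)))]

end EvolutionaryVectorField

theorem statement_13_general (𝔽 : Type) [Field 𝔽] (V : Type) [Ring V] [Algebra 𝔽 V]
    {ℓ : ℕ} (D : Fin ℓ → (V →ₗ[𝔽] V ⊗[𝔽] V)) (hD : ∀ i, Is2Deriv (D i))
    (hcomm : ∀ i j, StronglyComm (D i) (D j)) :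
    (∀ (P : Fin ℓ → V) (a b : V),
      XPvf 𝔽 V D P (a * b) = XPvf 𝔽 V D P a * b + a * XPvf 𝔽 V D P b) ∧
    (∀ P Q : Fin ℓ → V,
      XPvf 𝔽 V D P ∘ₗ XPvf 𝔽 V D Q - XPvf 𝔽 V D Q ∘ₗ XPvf 𝔽 V D P =
        XPvf 𝔽 V D (fun i => XPvf 𝔽 V D P (Q i) - XPvf 𝔽 V D Q (P i))) := by
  refine ⟨XPvf_mul hD, fun P Q => ?_⟩
  ext f
  change _ = XPvf 𝔽 V D ((fun i => XPvf 𝔽 V D P (Q i)) - fun i => XPvf 𝔽 V D Q (P i)) f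
  rw [XPvf_sub, LinearMap.sub_apply, LinearMap.sub_apply, LinearMap.comp_apply,
    LinearMap.comp_apply, XPvf_apply_XPvf hD hcomm, XPvf_apply_XPvf hD hcomm]
  abel

/-- with strongly commuting 2-fold derivations, each `X_P` is a derivation
and `[X_P, X_Q] = X_{[P,Q]}` where `[P,Q]_i = X_P(Q_i) − X_Q(P_i)`. -/
theorem statement_13 (𝔽 : Type) [Field 𝔽] [CharZero 𝔽] (V : Type) [Ring V] [Algebra 𝔽 V]
    {ℓ : ℕ} (D : Fin ℓ → (V →ₗ[𝔽] V ⊗[𝔽] V)) (hD : ∀ i, Is2Deriv (D i))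
    (hcomm : ∀ i j, StronglyComm (D i) (D j)) :
    (∀ (P : Fin ℓ → V) (a b : V),
      XPvf 𝔽 V D P (a * b) = XPvf 𝔽 V D P a * b + a * XPvf 𝔽 V D P b) ∧
    (∀ P Q : Fin ℓ → V,
      XPvf 𝔽 V D P ∘ₗ XPvf 𝔽 V D Q - XPvf 𝔽 V D Q ∘ₗ XPvf 𝔽 V D P =
        XPvf 𝔽 V D (fun i => XPvf 𝔽 V D P (Q i) - XPvf 𝔽 V D Q (P i))) :=
  statement_13_general 𝔽 V D hD hcomm
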